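/- arXiv:1909.07256 — 4 statements merged into one kernel-verified Lean document; each statement's English description precedes it below -/
import Mathlib

section
/- Let (X, λ) be a finite measure space and let (E_n)_{n≥1} be a sequence of measurable subsets of X such that ∑_{n=1}^∞ λ(E_n) diverges. Then λ(limsup_{n→∞} E_n) ≥ limsup_{N→∞} (∑_{n=1}^N λ(E_n))² / (∑_{m,n=1}^N λ(E_m ∩ E_n)). -/
/-!
Chung–Erdős inequality: for finitely many sets, Cauchy–Schwarz applied to `f = ∑ 𝟙_{E_n}`,
which vanishes off `⋃ E_n`, gives
`(∑ μ E_n)² = (∫ f)² ≤ μ(⋃ E_n) · ∫ f² = μ(⋃ E_n) · ∑ μ(E_m ∩ E_n)`.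
Apply it to the tail `E_{M+1}, …, E_N`. Since the partial sums `S_N` diverge, the tail sum is
`S_N - S_M ≥ b S_N` for any `b < 1` and large `N`, so `b² · limsup ≤ μ(⋃_{n > M} E_n)`.
Let `b → 1` and then `M → ∞`, using continuity from above of the finite measure.
-/

open MeasureTheory Filter Set
open scoped ENNReal Topology

section ChungErdos

variable {X : Type*} [MeasurableSpace X] {μ : Measure X}

theorem lintegral_sq_le_measure_mul_lintegral_sq {f : X → ℝ≥0∞} (hf : AEMeasurable f μ)
    {U : Set X} (hU : MeasurableSet U) (hfU : ∀ x ∉ U, f x = 0) :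
    (∫⁻ x, f x ∂μ) ^ 2 ≤ μ U * ∫⁻ x, f x ^ 2 ∂μ := by
  have hf_eq : U.indicator 1 * f = f := by
    ext x
    by_cases hx : x ∈ U <;> simp [hx, hfU]
  have hU_sq : ∫⁻ x, U.indicator 1 x ^ 2 ∂μ = μ U := by
    rw [← lintegral_indicator_one hU]
    congr with x
    by_cases hx : x ∈ U <;> simp [hx]
  have h := ENNReal.lintegral_mul_le_Lp_mul_Lq μ .two_two
    (measurable_one.indicator hU).aemeasurable hf
  simp only [hf_eq, ENNReal.rpow_ofNat, hU_sq] at h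
  calc (∫⁻ x, f x ∂μ) ^ 2
      ≤ ((μ U) ^ (1 / 2 : ℝ) * (∫⁻ x, f x ^ 2 ∂μ) ^ (1 / 2 : ℝ)) ^ 2 := by gcongr
    _ = μ U * ∫⁻ x, f x ^ 2 ∂μ := by
      rw [← ENNReal.mul_rpow_of_nonneg _ _ (by norm_num), ← ENNReal.rpow_natCast,
        ← ENNReal.rpow_mul]
      norm_num

theorem lintegral_sum_indicator_one {ι : Type*} {F : ι → Set X} (J : Finset ι)
    (hF : ∀ i ∈ J, MeasurableSet (F i)) :
    ∫⁻ x, ∑ i ∈ J, (F i).indicator 1 x ∂μ = ∑ i ∈ J, μ (F i) := by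
  rw [lintegral_finsetSum _ fun i hi => measurable_one.indicator (hF i hi)]
  exact Finset.sum_congr rfl fun i hi => lintegral_indicator_one (hF i hi)

theorem sq_sum_measure_le_measure_biUnion_mul {ι : Type*} {E : ι → Set X}
    (hE : ∀ i, MeasurableSet (E i)) (I : Finset ι) :
    (∑ i ∈ I, μ (E i)) ^ 2 ≤ μ (⋃ i ∈ I, E i) * ∑ i ∈ I, ∑ j ∈ I, μ (E i ∩ E j) := by
  set f : X → ℝ≥0∞ := fun x => ∑ i ∈ I, (E i).indicator 1 x
  have hf_sq : ∀ x, f x ^ 2 = ∑ p ∈ I ×ˢ I, (E p.1 ∩ E p.2).indicator 1 x := fun x => by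
    simp only [f, sq, Finset.sum_mul_sum, Finset.sum_product, inter_indicator_one,
      Pi.mul_apply]
  have hf_zero : ∀ x ∉ ⋃ i ∈ I, E i, f x = 0 := fun x hx =>
    Finset.sum_eq_zero fun i hi => indicator_of_notMem (fun hxi => hx (mem_biUnion hi hxi)) _
  have h := lintegral_sq_le_measure_mul_lintegral_sq (μ := μ) (f := f)
    (Finset.measurable_sum _ fun i _ => measurable_one.indicator (hE i)).aemeasurable
    (Finset.measurableSet_biUnion I fun i _ => hE i) hf_zero
  simp_rw [hf_sq] at h
  rwa [lintegral_sum_indicator_one I fun i _ => hE i,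
    lintegral_sum_indicator_one _ fun p _ => (hE p.1).inter (hE p.2), Finset.sum_product] at h

end ChungErdos

section TailBound

variable {α : Type*} {l : Filter α} {s t q : α → ℝ≥0∞} {c : ℝ≥0∞}

theorem ENNReal.eventually_mul_le_of_le_add (hs : Tendsto s l (𝓝 ∞)) (hc : c ≠ ∞)
    (hst : ∀ᶠ x in l, s x ≤ c + t x) {b : ℝ≥0∞} (hb : b < 1) :
    ∀ᶠ x in l, b * s x ≤ t x := by
  have h_top : Tendsto (fun x => (1 - b) * s x) l (𝓝 ∞) := by
    simpa [ENNReal.mul_top (tsub_pos_of_lt hb).ne'] using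
      ENNReal.Tendsto.const_mul (a := 1 - b) hs
        (Or.inr (tsub_le_self.trans_lt ENNReal.one_lt_top).ne)
  filter_upwards [h_top.eventually (eventually_gt_nhds hc.lt_top), hst] with x hcx hx
  refine ENNReal.le_of_add_le_add_right hc ?_
  calc b * s x + c ≤ b * s x + (1 - b) * s x := by gcongr
    _ = s x := by rw [← add_mul, add_tsub_cancel_of_le hb.le, one_mul]
    _ ≤ t x + c := by rwa [add_comm]

theorem ENNReal.limsup_sq_div_le_of_le_add (hs : Tendsto s l (𝓝 ∞)) (hc : c ≠ ∞)
    (hst : ∀ᶠ x in l, s x ≤ c + t x) {B : ℝ≥0∞} (htq : ∀ᶠ x in l, t x ^ 2 ≤ B * q x) :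
    limsup (fun x => s x ^ 2 / q x) l ≤ B := by
  set L := limsup (fun x => s x ^ 2 / q x) l
  have h_lt_one : ∀ b < 1, b ^ 2 * L ≤ B := fun b hb => by
    rw [← ENNReal.limsup_const_mul_of_ne_top
      (ENNReal.pow_ne_top (hb.trans ENNReal.one_lt_top).ne)]
    refine limsup_le_of_le (by isBoundedDefault) ?_
    filter_upwards [ENNReal.eventually_mul_le_of_le_add hs hc hst hb, htq] with x hbst hx
    rw [← mul_div_assoc, ← mul_pow]
    exact ENNReal.div_le_of_le_mul (le_trans (by gcongr) hx)
  have h_tendsto : Tendsto (fun b : ℝ≥0∞ => b ^ 2 * L) (𝓝[<] 1) (𝓝 L) := by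
    simpa using ENNReal.Tendsto.mul_const
      ((ENNReal.continuous_pow 2).tendsto' 1 1 (one_pow 2) |>.mono_left nhdsWithin_le_nhds)
      (Or.inl one_ne_zero)
  exact le_of_tendsto h_tendsto (eventually_nhdsWithin_of_forall h_lt_one)

end TailBound

theorem ENNReal.tendsto_sum_Icc_one_atTop {f : ℕ → ℝ≥0∞} (hf : ∑' n, f n = ∞)
    (h0 : f 0 ≠ ∞) : Tendsto (fun N => ∑ n ∈ Finset.Icc 1 N, f n) atTop (𝓝 ∞) := by
  have h := ENNReal.tendsto_nat_tsum fun n => f (n + 1)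
  rw [ENNReal.tsum_add_one_eq_top hf h0] at h
  refine h.congr fun N => ?_
  rw [Finset.range_eq_Ico, Finset.sum_Ico_add' f, ← Finset.Ico_add_one_right_eq_Icc, zero_add]

theorem tendsto_measure_iUnion_ge_limsup {X : Type*} [MeasurableSpace X] (μ : Measure X)
    [IsFiniteMeasure μ] {E : ℕ → Set X} (hE : ∀ n, MeasurableSet (E n)) :
    Tendsto (fun M => μ (⋃ n ≥ M, E n)) atTop (𝓝 (μ (limsup E atTop))) := by
  rw [limsup_eq_iInf_iSup_of_nat]
  simp only [iInf_eq_iInter, iSup_eq_iUnion]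
  exact tendsto_measure_iInter_atTop
    (fun M => (MeasurableSet.biUnion (to_countable _) fun n _ => hE n).nullMeasurableSet)
    (fun M N hMN => biUnion_mono (fun n hn => le_trans hMN hn) fun _ _ => le_rfl)
    ⟨0, measure_ne_top μ _⟩

/-- Quantitative Borel–Cantelli (Lemma 2.3 of Harman): in a finite measure space, if
`∑ μ(Eₙ)` diverges, then `μ(limsup Eₙ)` is at least
`limsup_N (∑_{n=1}^N μ(Eₙ))² / (∑_{m,n=1}^N μ(Eₘ ∩ Eₙ))`. -/
theorem stmt2
    {X : Type*} [MeasurableSpace X] (μ : Measure X) [IsFiniteMeasure μ]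
    (E : ℕ → Set X) (hE : ∀ n, MeasurableSet (E n))
    (hdiv : ∑' n, μ (E n) = ⊤) :
    limsup (fun N : ℕ =>
        (∑ n ∈ Finset.Icc 1 N, μ (E n)) ^ 2 /
          ∑ m ∈ Finset.Icc 1 N, ∑ n ∈ Finset.Icc 1 N, μ (E m ∩ E n)) atTop
      ≤ μ (limsup E atTop) := by
  refine ge_of_tendsto' ((tendsto_measure_iUnion_ge_limsup μ hE).comp (tendsto_add_atTop_nat 1))
    fun M => ENNReal.limsup_sq_div_le_of_le_add (c := ∑ n ∈ Finset.Icc 1 M, μ (E n))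
      (t := fun N => ∑ n ∈ Finset.Ioc M N, μ (E n))
      (ENNReal.tendsto_sum_Icc_one_atTop hdiv (measure_ne_top μ _))
      (ENNReal.sum_ne_top.2 fun n _ => measure_ne_top μ _) ?_ ?_
  · filter_upwards [eventually_ge_atTop M] with N hMN
    have h_Icc_one : ∀ K, Finset.Icc 1 K = Finset.Ioc 0 K := Finset.Icc_add_one_left_eq_Ioc 0
    rw [h_Icc_one, h_Icc_one, Finset.sum_Ioc_consecutive _ (Nat.zero_le M) hMN]
  · refine Eventually.of_forall fun N => ?_
    have h_sub : Finset.Ioc M N ⊆ Finset.Icc 1 N := fun n hn => by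
      simp only [Finset.mem_Ioc, Finset.mem_Icc] at hn ⊢
      omega
    calc (∑ n ∈ Finset.Ioc M N, μ (E n)) ^ 2
        ≤ μ (⋃ n ∈ Finset.Ioc M N, E n) *
            ∑ m ∈ Finset.Ioc M N, ∑ n ∈ Finset.Ioc M N, μ (E m ∩ E n) :=
          sq_sum_measure_le_measure_biUnion_mul hE _
      _ ≤ μ (⋃ n ≥ M + 1, E n) *
            ∑ m ∈ Finset.Icc 1 N, ∑ n ∈ Finset.Icc 1 N, μ (E m ∩ E n) := by
        gcongr ?_ * ?_
        · exact measure_mono (biUnion_subset_biUnion_left fun n hn => (Finset.mem_Ioc.1 hn).1)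
        · exact (Finset.sum_le_sum fun m _ => Finset.sum_le_sum_of_subset h_sub).trans
            (Finset.sum_le_sum_of_subset h_sub)
end

section
/- Fix ε ∈ (0,1) and C > 0, and let (p_m) be any sequence with 0 ≤ p_m ≤ 1 and p_m ≤ C (log m)^{-ε} for all m ≥ 2. Then there is a constant C' (depending only on C and ε) such that for all n ≥ 2: ∑ p_m · m ≤ C' · n, where the sum is over all integers m with 1 ≤ m < n and gcd(m,n) ≥ n/(log n)^{ε/2}. -/
open Filter Set

/-- If `0 ≤ pₘ ≤ 1` and `pₘ ≤ C (log m)^{-ε}` for all `m ≥ 2`, then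
`∑ pₘ · m ≪ n`, where the sum ranges over `1 ≤ m < n` with `gcd(m,n) ≥ n/(log n)^{ε/2}`. -/
theorem stmt5 (ε C : ℝ) (hε : ε ∈ Set.Ioo (0 : ℝ) 1) (hC : 0 < C)
    (p : ℕ → ℝ) (hp : ∀ m, p m ∈ Set.Icc (0 : ℝ) 1)
    (hdecay : ∀ m : ℕ, 2 ≤ m → p m ≤ C * Real.log m ^ (-ε)) :
    ∃ C' : ℝ, ∀ n : ℕ, 2 ≤ n →
      ∑ m ∈ (Finset.Ico 1 n).filter
          (fun m => (n : ℝ) / Real.log n ^ (ε / 2) ≤ (Nat.gcd m n : ℝ)),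
        p m * m ≤ C' * n := by
  obtain ⟨hε0, hε1⟩ := hε
  refine ⟨1 + C * 2 ^ ε, fun n hn => ?_⟩
  have hn0 : 0 < n := by omega
  have hn1 : (1 : ℝ) < n := by exact_mod_cast hn.trans_lt' one_lt_two
  have hlogn : 0 < Real.log n := Real.log_pos hn1
  set L : ℝ := Real.log n ^ (ε / 2) with hLdef
  have hL0 : 0 < L := Real.rpow_pos_of_pos hlogn _
  set S := (Finset.Ico 1 n).filter
      (fun m => (n : ℝ) / L ≤ (Nat.gcd m n : ℝ)) with hSdef
  set k := Nat.floor L with hkdef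
  -- basic facts about members of S
  have hmem : ∀ m ∈ S, 1 ≤ m ∧ m < n ∧ 0 < Nat.gcd m n ∧ Nat.gcd m n ∣ n ∧
      Nat.gcd m n ∣ m ∧ (n : ℝ) / L ≤ (Nat.gcd m n : ℝ) := by
    intro m hm
    simp only [hSdef, Finset.mem_filter, Finset.mem_Ico] at hm
    obtain ⟨⟨h1, h2⟩, h3⟩ := hm
    exact ⟨h1, h2, Nat.gcd_pos_of_pos_left _ (by omega), Nat.gcd_dvd_right _ _,
      Nat.gcd_dvd_left _ _, h3⟩
  -- cardinality bound
  have hcard : (S.card : ℝ) ≤ L * L := by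
    have hinj : ∀ m ∈ S, (n / Nat.gcd m n, m / Nat.gcd m n) ∈
        Finset.Icc 1 k ×ˢ Finset.Icc 1 k := by
      intro m hm
      obtain ⟨h1, h2, hd0, hdn, hdm, hg⟩ := hmem m hm
      have hdlen : Nat.gcd m n ≤ n := Nat.le_of_dvd hn0 hdn
      have hdlem : Nat.gcd m n ≤ m := Nat.le_of_dvd (by omega) hdm
      have hndL : ((n / Nat.gcd m n : ℕ) : ℝ) ≤ L := by
        rw [Nat.cast_div hdn (by exact_mod_cast hd0.ne')]
        rw [div_le_iff₀ (by exact_mod_cast hd0)]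
        rw [div_le_iff₀ hL0] at hg
        linarith [hg]
      have hkL : n / Nat.gcd m n ≤ k := Nat.le_floor hndL
      have hmdk : m / Nat.gcd m n ≤ k :=
        le_trans (Nat.div_le_div_right (le_of_lt h2)) hkL
      simp only [Finset.mem_product, Finset.mem_Icc]
      refine ⟨⟨?_, hkL⟩, ?_, hmdk⟩
      · exact (Nat.one_le_div_iff hd0).mpr hdlen
      · exact (Nat.one_le_div_iff hd0).mpr hdlem
    have hinj2 : Set.InjOn (fun m => (n / Nat.gcd m n, m / Nat.gcd m n)) S := by
      intro m1 hm1 m2 hm2 heq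
      obtain ⟨_, _, hd01, hdn1, hdm1, _⟩ := hmem m1 hm1
      obtain ⟨_, _, hd02, hdn2, hdm2, _⟩ := hmem m2 hm2
      simp only [Prod.mk.injEq] at heq
      have hd : Nat.gcd m1 n = Nat.gcd m2 n := by
        have e1 : n / (n / Nat.gcd m1 n) = Nat.gcd m1 n :=
          Nat.div_div_self hdn1 hn0.ne'
        have e2 : n / (n / Nat.gcd m2 n) = Nat.gcd m2 n :=
          Nat.div_div_self hdn2 hn0.ne'
        rw [← e1, ← e2, heq.1]
      have e1 : m1 / Nat.gcd m1 n * Nat.gcd m1 n = m1 := Nat.div_mul_cancel hdm1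
      have e2 : m2 / Nat.gcd m2 n * Nat.gcd m2 n = m2 := Nat.div_mul_cancel hdm2
      rw [← e1, ← e2, heq.2, hd]
    have := Finset.card_le_card_of_injOn _ hinj hinj2
    have hkk : ((Finset.Icc 1 k ×ˢ Finset.Icc 1 k).card : ℝ) ≤ L * L := by
      rw [Finset.card_product, Nat.card_Icc]
      push_cast
      have hkL : (k : ℝ) ≤ L := Nat.floor_le hL0.le
      nlinarith [hkL, hL0]
    calc (S.card : ℝ) ≤ _ := by exact_mod_cast this
      _ ≤ L * L := hkk
  -- the term bound
  set B : ℝ := C * 2 ^ ε * Real.log n ^ (-ε) * n with hBdef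
  have hB0 : 0 ≤ B := by positivity
  have hterm : ∀ m ∈ S, p m * m ≤ 1 + B := by
    intro m hm
    obtain ⟨h1, h2, hd0, hdn, hdm, hg⟩ := hmem m hm
    rcases eq_or_lt_of_le h1 with h1' | h1'
    · -- m = 1
      subst h1'
      have := (hp 1).2
      have h01 := (hp 1).1
      push_cast
      nlinarith
    · -- m ≥ 2
      have hm2 : 2 ≤ m := h1'
      have hdlem : Nat.gcd m n ≤ m := Nat.le_of_dvd (by omega) hdm
      -- log m ≥ (1/2) log n
      have hmT : (n : ℝ) / L ≤ m := hg.trans (by exact_mod_cast hdlem)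
      have hT0 : 0 < (n : ℝ) / L := by positivity
      have hlogm : Real.log n / 2 ≤ Real.log m := by
        have h1 : Real.log ((n : ℝ) / L) ≤ Real.log m :=
          Real.log_le_log hT0 hmT
        have h2 : Real.log ((n : ℝ) / L) = Real.log n - (ε / 2) * Real.log (Real.log n) := by
          rw [Real.log_div (by positivity) hL0.ne', hLdef, Real.log_rpow hlogn]
        have h3 : (ε / 2) * Real.log (Real.log n) ≤ Real.log n / 2 := by
          rcases le_or_gt (Real.log (Real.log n)) 0 with h | h
          · nlinarith
          · have hll : Real.log (Real.log n) ≤ Real.log n := by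
              linarith [Real.log_le_self hlogn.le]
            nlinarith
        linarith
      have hlogm0 : 0 < Real.log m := by linarith
      -- rpow bound
      have hr : Real.log m ^ (-ε) ≤ 2 ^ ε * Real.log n ^ (-ε) := by
        have h1 : Real.log m ^ (-ε) ≤ (Real.log n / 2) ^ (-ε) :=
          Real.rpow_le_rpow_of_nonpos (by linarith) hlogm (by linarith)
        have h2 : (Real.log n / 2) ^ (-ε) = 2 ^ ε * Real.log n ^ (-ε) := by
          rw [div_eq_mul_inv, Real.mul_rpow hlogn.le (by positivity),
            ← Real.rpow_neg_one (2 : ℝ),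
            ← Real.rpow_mul (by norm_num : (0:ℝ) ≤ 2)]
          ring_nf
        rw [h2] at h1; exact h1
      have hpm : p m ≤ C * Real.log m ^ (-ε) := hdecay m hm2
      have hpm0 := (hp m).1
      have hmn : (m : ℝ) ≤ n := by exact_mod_cast h2.le
      have : p m * m ≤ C * Real.log m ^ (-ε) * m := by
        apply mul_le_mul_of_nonneg_right hpm (by positivity)
      calc p m * m ≤ C * Real.log m ^ (-ε) * m := this
        _ ≤ C * (2 ^ ε * Real.log n ^ (-ε)) * n := by
            apply mul_le_mul (mul_le_mul_of_nonneg_left hr hC.le) hmn (by positivity)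
            positivity
        _ = B := by ring
        _ ≤ 1 + B := by linarith
  -- put it together
  have hsum : ∑ m ∈ S, p m * m ≤ S.card • (1 + B) :=
    Finset.sum_le_card_nsmul S _ _ hterm
  rw [nsmul_eq_mul] at hsum
  have hLL : L * L = Real.log n ^ ε := by
    rw [hLdef, ← Real.rpow_add hlogn]; ring_nf
  have hLB : (Real.log n ^ ε) * B = C * 2 ^ ε * n := by
    rw [hBdef]
    rw [show Real.log n ^ ε * (C * 2 ^ ε * Real.log n ^ (-ε) * n)
        = (Real.log n ^ ε * Real.log n ^ (-ε)) * (C * 2 ^ ε * n) by ring,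
      ← Real.rpow_add hlogn]
    simp
  have hlogle : Real.log n ^ ε ≤ (n : ℝ) := by
    rcases le_or_gt (Real.log n) 1 with h | h
    · exact (Real.rpow_le_one hlogn.le h hε0.le).trans hn1.le
    · calc Real.log n ^ ε ≤ Real.log n ^ (1:ℝ) :=
            Real.rpow_le_rpow_of_exponent_le h.le hε1.le
        _ = Real.log n := Real.rpow_one _
        _ ≤ n := Real.log_le_self (by positivity)
  calc ∑ m ∈ S, p m * m ≤ S.card * (1 + B) := hsum
    _ ≤ L * L * (1 + B) := by
        apply mul_le_mul_of_nonneg_right hcard (by linarith)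
    _ = Real.log n ^ ε + Real.log n ^ ε * B := by rw [hLL]; ring
    _ = Real.log n ^ ε + C * 2 ^ ε * n := by rw [hLB]
    _ ≤ n + C * 2 ^ ε * n := by linarith
    _ = (1 + C * 2 ^ ε) * n := by ring
end

section
/- Let ψ : ℕ → [0,1/2] and let m ≠ n be positive integers. In the random model, E[λ(E_m^Q ∩ E_n^Q)] = p_m · p_n · λ(E_m^S ∩ E_n^S), where E denotes expectation over the random choice of P. -/
/-!
Since `ψ ≤ 1/2`, the intervals `((a-ψ(n))/n, (a+ψ(n))/n)` for fixed `n` are pairwise disjoint,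
so `λ(E_m^A ∩ E_n^B)` is the sum over `(a, b) ∈ A × B` of the overlaps of the `a`-th interval
at level `m` with the `b`-th one at level `n`. For random `A = Q_m`, `B = Q_n`, the pair
`(a, b)` contributes exactly when `a ∈ P_m` and `b ∈ P_n`; as `m ≠ n` these are two distinct
independent events, so by monotone convergence the expectation of the sum is `pₘ pₙ` times
the same sum over `S_m × S_n`.
-/

open MeasureTheory ProbabilityTheory Filter Set

noncomputable section

/-- The approximation set `⋃_{a ∈ A} ((a-ψ(n))/n, (a+ψ(n))/n)`. -/
def approxSet (A : Set ℕ) (ψ : ℕ → ℝ) (n : ℕ) : Set ℝ :=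
  ⋃ a ∈ A, Set.Ioo (((a : ℝ) - ψ n) / n) (((a : ℝ) + ψ n) / n)

/-- The set of partially reduced numerators: `a ∈ {1,…,n}` with `gcd(a,n) ≤ (log n)^{ε/2}`. -/
def Sred (ε : ℝ) (n : ℕ) : Set ℕ :=
  {a | 1 ≤ a ∧ a ≤ n ∧ (Nat.gcd a n : ℝ) ≤ Real.log n ^ (ε / 2)}

open Function

def approxInterval (ψ : ℕ → ℝ) (n a : ℕ) : Set ℝ :=
  Ioo (((a : ℝ) - ψ n) / n) (((a : ℝ) + ψ n) / n)

lemma pairwise_disjoint_approxInterval {ψ : ℕ → ℝ} {n : ℕ} (hψ : ψ n ≤ 1 / 2) :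
    Pairwise (Disjoint on approxInterval ψ n) := by
  refine (pairwise_disjoint_on _).2 fun a b hab ↦ ?_
  have hab' : (a : ℝ) + 1 ≤ b := by exact_mod_cast hab
  have hgap : ((a : ℝ) + ψ n) / n ≤ ((b : ℝ) - ψ n) / n :=
    div_le_div_of_nonneg_right (by linarith) n.cast_nonneg
  exact Set.disjoint_left.2 fun x hxa hxb ↦ (hxa.2.trans_le hgap).not_gt hxb.1

lemma Pairwise.disjoint_inter_prod {α β γ : Type*} {f : α → Set γ} {g : β → Set γ}
    (hf : Pairwise (Disjoint on f)) (hg : Pairwise (Disjoint on g)) :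
    Pairwise (Disjoint on fun q : α × β ↦ f q.1 ∩ g q.2) := by
  rintro ⟨a, b⟩ ⟨a', b'⟩ hne
  by_cases ha : a = a'
  · have hb : b ≠ b' := fun hb ↦ hne (by rw [ha, hb])
    exact (hg hb).mono inter_subset_right inter_subset_right
  · exact (hf ha).mono inter_subset_left inter_subset_left

lemma volume_approxSet_inter {ψ : ℕ → ℝ} {m n : ℕ} (hψm : ψ m ≤ 1 / 2)
    (hψn : ψ n ≤ 1 / 2) (A B : Set ℕ) :
    volume (approxSet A ψ m ∩ approxSet B ψ n) = ∑' q : ℕ × ℕ, (A ×ˢ B).indicator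
      (fun q ↦ volume (approxInterval ψ m q.1 ∩ approxInterval ψ n q.2)) q := by
  have hunion : approxSet A ψ m ∩ approxSet B ψ n
      = ⋃ q ∈ A ×ˢ B, approxInterval ψ m q.1 ∩ approxInterval ψ n q.2 := by
    simp_rw [biUnion_prod', approxSet, iUnion₂_inter, inter_iUnion₂]
    rfl
  rw [hunion, measure_biUnion (to_countable _)
    (((pairwise_disjoint_approxInterval hψm).disjoint_inter_prod
      (pairwise_disjoint_approxInterval hψn)).set_pairwise _)
    fun _ _ ↦ measurableSet_Ioo.inter measurableSet_Ioo]
  exact tsum_subtype (A ×ˢ B)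
    fun q ↦ volume (approxInterval ψ m q.1 ∩ approxInterval ψ n q.2)

lemma ProbabilityTheory.iIndepSet.measure_inter_eq_mul {Ω ι : Type*} [MeasurableSpace Ω]
    {μ : Measure Ω} {s : ι → Set Ω} (h : iIndepSet s μ) {i j : ι} (hij : i ≠ j) :
    μ (s i ∩ s j) = μ (s i) * μ (s j) := by
  classical
  simpa [Finset.set_biInter_insert, Finset.prod_pair hij] using h.meas_biInter {i, j}

lemma lintegral_tsum_indicator_const {Ω ι : Type*} [MeasurableSpace Ω] [Countable ι]
    {μ : Measure Ω} {E : ι → Set Ω} (hE : ∀ i, MeasurableSet (E i)) (c : ι → ENNReal) :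
    ∫⁻ ω, ∑' i, (E i).indicator (fun _ ↦ c i) ω ∂μ = ∑' i, c i * μ (E i) := by
  rw [lintegral_tsum fun i ↦ (measurable_const.indicator (hE i)).aemeasurable]
  simp_rw [lintegral_indicator_const (hE _)]

theorem stmt6_general
    {Ω : Type*} [MeasurableSpace Ω] (μ : Measure Ω)
    (ε : ℝ)
    (p : ℕ → ℝ)
    (P : Ω → ℕ → Set ℕ)
    (hPmeas : ∀ n a : ℕ, MeasurableSet {ω | a ∈ P ω n})
    (hPprob : ∀ n a : ℕ, 1 ≤ a → a ≤ n → μ {ω | a ∈ P ω n} = ENNReal.ofReal (p n))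
    (hPindep : iIndepSet (fun q : ℕ × ℕ => {ω | q.2 ∈ P ω q.1}) μ)
    (ψ : ℕ → ℝ) (hψ : ∀ k, ψ k ∈ Set.Icc (0 : ℝ) (1 / 2))
    (m n : ℕ) (hmn : m ≠ n) :
    ∫⁻ ω, volume (approxSet (P ω m ∩ Sred ε m) ψ m ∩ approxSet (P ω n ∩ Sred ε n) ψ n) ∂μ
      = ENNReal.ofReal (p m) * ENNReal.ofReal (p n) *
        volume (approxSet (Sred ε m) ψ m ∩ approxSet (Sred ε n) ψ n) := by
  classical
  set w : ℕ × ℕ → ENNReal :=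
    (Sred ε m ×ˢ Sred ε n).indicator
      fun q ↦ volume (approxInterval ψ m q.1 ∩ approxInterval ψ n q.2)
  set E : ℕ × ℕ → Set Ω := fun q ↦ {ω | q.1 ∈ P ω m} ∩ {ω | q.2 ∈ P ω n}
  have hE : ∀ q, MeasurableSet (E q) := fun q ↦ (hPmeas m q.1).inter (hPmeas n q.2)
  have hintegrand : ∀ ω q, ((P ω m ∩ Sred ε m) ×ˢ (P ω n ∩ Sred ε n)).indicator
      (fun q ↦ volume (approxInterval ψ m q.1 ∩ approxInterval ψ n q.2)) q
        = (E q).indicator (fun _ ↦ w q) ω := by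
    intro ω q
    rw [← prod_inter_prod, ← indicator_indicator]
    simp only [indicator, mem_prod, E, w, mem_inter_iff, mem_ofPred_eq]
  have hprob : ∀ q ∈ Sred ε m ×ˢ Sred ε n,
      μ (E q) = ENNReal.ofReal (p m) * ENNReal.ofReal (p n) := by
    rintro ⟨a, b⟩ ⟨⟨ha, ham, -⟩, ⟨hb, hbn, -⟩⟩
    rw [← hPprob m a ha ham, ← hPprob n b hb hbn]
    exact hPindep.measure_inter_eq_mul (i := (m, a)) (j := (n, b)) (by simp [hmn])
  simp_rw [volume_approxSet_inter (hψ m).2 (hψ n).2, hintegrand,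
    lintegral_tsum_indicator_const hE, ← ENNReal.tsum_mul_left]
  congr 1 with q
  by_cases hq : q ∈ Sred ε m ×ˢ Sred ε n
  · rw [hprob q hq, mul_comm]
  · simp [w, hq]

/-- For `m ≠ n`, the expected overlap satisfies
`E[λ(E_m^Q ∩ E_n^Q)] = pₘ pₙ λ(E_m^S ∩ E_n^S)`. -/
theorem stmt6
    {Ω : Type*} [MeasurableSpace Ω] (μ : Measure Ω) [IsProbabilityMeasure μ]
    (ε : ℝ) (hε : ε ∈ Set.Ioo (0 : ℝ) 1)
    (p : ℕ → ℝ) (hp : ∀ n, p n ∈ Set.Icc (0 : ℝ) 1)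
    (P : Ω → ℕ → Set ℕ)
    (hPsub : ∀ ω n, P ω n ⊆ Set.Icc 1 n)
    (hPmeas : ∀ n a : ℕ, MeasurableSet {ω | a ∈ P ω n})
    (hPprob : ∀ n a : ℕ, 1 ≤ a → a ≤ n → μ {ω | a ∈ P ω n} = ENNReal.ofReal (p n))
    (hPindep : iIndepSet (fun q : ℕ × ℕ => {ω | q.2 ∈ P ω q.1}) μ)
    (ψ : ℕ → ℝ) (hψ : ∀ k, ψ k ∈ Set.Icc (0 : ℝ) (1 / 2))
    (m n : ℕ) (hm : 0 < m) (hn : 0 < n) (hmn : m ≠ n) :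
    ∫⁻ ω, volume (approxSet (P ω m ∩ Sred ε m) ψ m ∩ approxSet (P ω n ∩ Sred ε n) ψ n) ∂μ
      = ENNReal.ofReal (p m) * ENNReal.ofReal (p n) *
        volume (approxSet (Sred ε m) ψ m ∩ approxSet (Sred ε n) ψ n) :=
  stmt6_general μ ε p P hPmeas hPprob hPindep ψ hψ m n hmn
end
end

section
/- Fix ε ∈ (0,1) and a sequence (p_n) with 0 ≤ p_n ≤ 1, and let ψ : ℕ → [0,1/2]. For every interval J ⊆ [0,1] and every N ∈ ℕ: σ²[ ∑_{n=1}^N λ(E_n^Q ∩ J) ] ≤ 4 ∑_{n=1}^N p_n ψ(n)² / n, where σ² denotes variance over the random choice of P. -/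
/-!
Since `ψ(n) ≤ 1/2`, the intervals `((a-ψ(n))/n, (a+ψ(n))/n)` for distinct `a` are disjoint, so
`λ(E_n^Q ∩ J) = ∑_{a ≤ n} 1[a ∈ P_n] · w(n,a)` with deterministic weights
`0 ≤ w(n,a) ≤ 2ψ(n)/n`. The sum over `n ≤ N` is thus a weighted sum of indicators of independent
events, whose variance is the sum of the variances `w(n,a)² p_n (1 - p_n) ≤ 4 p_n ψ(n)²/n²`;
summing over the `n` numerators of each level gives the bound.
-/

open MeasureTheory ProbabilityTheory Filter Set

noncomputable section

/-- The random approximation set `E_n^Q`, with numerators in `Q_n = P_n ∩ S_n`. -/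
def EQset (ε : ℝ) (P : ℕ → Set ℕ) (ψ : ℕ → ℝ) (n : ℕ) : Set ℝ :=
  approxSet (P n ∩ Sred ε n) ψ n

namespace ProbabilityTheory

variable {Ω : Type*} [MeasurableSpace Ω] {μ : Measure Ω}

lemma variance_indicator_const_le [IsProbabilityMeasure μ] {A : Set Ω} (hA : MeasurableSet A)
    (c : ℝ) : variance (A.indicator fun _ => c) μ ≤ c ^ 2 * μ.real A := by
  calc variance (A.indicator fun _ => c) μ
      ≤ μ[(A.indicator fun _ => c) ^ 2] :=
        variance_le_expectation_sq (measurable_const.indicator hA).aestronglyMeasurable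
    _ = μ[A.indicator fun _ => c ^ 2] := by
        congr 1
        ext ω
        by_cases hω : ω ∈ A <;> simp [hω]
    _ = c ^ 2 * μ.real A := by rw [integral_indicator_const _ hA, smul_eq_mul, mul_comm]

lemma iIndepSet.variance_sum_indicator_le [IsProbabilityMeasure μ] {ι : Type*} {A : ι → Set Ω}
    (hind : iIndepSet A μ) (hA : ∀ i, MeasurableSet (A i)) (c : ι → ℝ) (s : Finset ι) :
    variance (fun ω => ∑ i ∈ s, (A i).indicator (fun _ => c i) ω) μ
      ≤ ∑ i ∈ s, c i ^ 2 * μ.real (A i) := by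
  have hscale : ∀ i, (fun x : ℝ => c i * x) ∘ (A i).indicator (fun _ => 1)
      = (A i).indicator fun _ => c i := fun i => by
    ext ω
    by_cases hω : ω ∈ A i <;> simp [hω]
  have hpair : Set.Pairwise ↑s fun i j =>
      IndepFun ((A i).indicator fun _ => c i) ((A j).indicator fun _ => c j) μ := by
    intro i _ j _ hij
    rw [← hscale i, ← hscale j]
    exact (hind.iIndepFun_indicator.indepFun hij).comp
      (measurable_const_mul _) (measurable_const_mul _)
  have hmemLp : ∀ i ∈ s, MemLp ((A i).indicator fun _ => c i) 2 μ := fun i _ =>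
    memLp_indicator_const 2 (hA i) _ (Or.inr (measure_ne_top μ _))
  rw [← Finset.sum_fn, IndepFun.variance_sum hmemLp hpair]
  exact Finset.sum_le_sum fun i _ => variance_indicator_const_le (hA i) (c i)

end ProbabilityTheory

lemma pairwise_disjoint_Ioo_div {δ : ℝ} (hδ : δ ≤ 1 / 2) (n : ℕ) :
    Pairwise (Function.onFun Disjoint fun a : ℕ =>
      Ioo (((a : ℝ) - δ) / n) (((a : ℝ) + δ) / n)) := by
  refine (pairwise_disjoint_on _).2 fun a b hab => Set.disjoint_left.2 ?_
  have hgap : ((a : ℝ) + δ) / n ≤ ((b : ℝ) - δ) / n := by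
    have : (a : ℝ) + 1 ≤ b := by exact_mod_cast hab
    gcongr
    linarith
  rintro x ⟨-, hxa⟩ ⟨hxb, -⟩
  linarith

lemma measureReal_Ioo_div_inter_le {δ : ℝ} (hδ : 0 ≤ δ) (n a : ℕ) (J : Set ℝ) :
    volume.real (Ioo (((a : ℝ) - δ) / n) (((a : ℝ) + δ) / n) ∩ J) ≤ 2 * δ / n := by
  refine (measureReal_mono inter_subset_left measure_Ioo_lt_top.ne).trans_eq ?_
  rw [Real.volume_real_Ioo_of_le (by gcongr; linarith)]
  ring

-- Measuring inside `volume.restrict J` gives additivity over the disjoint intervals without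
-- any measurability of `J`.
lemma measureReal_approxSet_inter {A : Set ℕ} {s : Finset ℕ} (hAs : A ⊆ s) {ψ : ℕ → ℝ} {n : ℕ}
    (hψ : ψ n ≤ 1 / 2) (J : Set ℝ) :
    volume.real (approxSet A ψ n ∩ J) = ∑ a ∈ s, A.indicator
      (fun a => volume.real (Ioo (((a : ℝ) - ψ n) / n) (((a : ℝ) + ψ n) / n) ∩ J)) a := by
  classical
  have hI : ∀ a : ℕ, MeasurableSet (Ioo (((a : ℝ) - ψ n) / n) (((a : ℝ) + ψ n) / n)) :=
    fun _ => measurableSet_Ioo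
  calc volume.real (approxSet A ψ n ∩ J)
      = (volume.restrict J).real
          (⋃ a ∈ s.filter (· ∈ A), Ioo (((a : ℝ) - ψ n) / n) (((a : ℝ) + ψ n) / n)) := by
        rw [measureReal_restrict_apply (Finset.measurableSet_biUnion _ fun a _ => hI a),
          approxSet]
        congr 2
        ext x
        simp only [mem_iUnion, Finset.mem_filter, exists_prop]
        exact exists_congr fun a => ⟨fun h => ⟨⟨hAs h.1, h.1⟩, h.2⟩, fun h => ⟨h.1.2, h.2⟩⟩
    _ = ∑ a ∈ s.filter (· ∈ A),
          (volume.restrict J).real (Ioo (((a : ℝ) - ψ n) / n) (((a : ℝ) + ψ n) / n)) :=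
        measureReal_biUnion_finset ((pairwise_disjoint_Ioo_div hψ n).set_pairwise _)
          (fun a _ => hI a)
          (fun _ _ => ((Measure.restrict_apply_le _ _).trans_lt measure_Ioo_lt_top).ne)
    _ = _ := by
        rw [Finset.sum_indicator_eq_sum_filter]
        simp only [measureReal_restrict_apply (hI _)]

def fractionIndices (N : ℕ) : Finset (ℕ × ℕ) :=
  (Finset.Icc 1 N ×ˢ Finset.Icc 1 N).filter fun q => q.2 ≤ q.1

lemma mem_fractionIndices {N : ℕ} {q : ℕ × ℕ} :
    q ∈ fractionIndices N ↔ q.1 ∈ Finset.Icc 1 N ∧ q.2 ∈ Finset.Icc 1 q.1 := by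
  simp only [fractionIndices, Finset.mem_filter, Finset.mem_product, Finset.mem_Icc]
  omega

lemma sum_fractionIndices {M : Type*} [AddCommMonoid M] (N : ℕ) (f : ℕ × ℕ → M) :
    ∑ q ∈ fractionIndices N, f q = ∑ n ∈ Finset.Icc 1 N, ∑ a ∈ Finset.Icc 1 n, f (n, a) :=
  Finset.sum_finset_product _ _ _ fun _ => mem_fractionIndices

/-- The length that the numerator `a`, if selected, contributes to `E_n^Q ∩ J`. -/
def numeratorWeight (ε : ℝ) (ψ : ℕ → ℝ) (J : Set ℝ) (n : ℕ) : ℕ → ℝ :=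
  (Sred ε n).indicator fun a => volume.real (Ioo (((a : ℝ) - ψ n) / n) (((a : ℝ) + ψ n) / n) ∩ J)

lemma numeratorWeight_nonneg (ε : ℝ) (ψ : ℕ → ℝ) (J : Set ℝ) (n a : ℕ) :
    0 ≤ numeratorWeight ε ψ J n a :=
  Set.indicator_nonneg (fun _ _ => measureReal_nonneg) _

lemma numeratorWeight_le (ε : ℝ) {ψ : ℕ → ℝ} (J : Set ℝ) {n : ℕ} (hψ : 0 ≤ ψ n) (a : ℕ) :
    numeratorWeight ε ψ J n a ≤ 2 * ψ n / n :=
  Set.indicator_apply_le' (fun _ => measureReal_Ioo_div_inter_le hψ n a J)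
    (fun _ => by positivity)

lemma measureReal_EQset_inter (ε : ℝ) (P : ℕ → Set ℕ) {ψ : ℕ → ℝ} {n : ℕ} (hψ : ψ n ≤ 1 / 2)
    (J : Set ℝ) :
    volume.real (EQset ε P ψ n ∩ J)
      = ∑ a ∈ Finset.Icc 1 n, (P n).indicator (numeratorWeight ε ψ J n) a := by
  rw [EQset, measureReal_approxSet_inter (s := Finset.Icc 1 n)
    (fun a ha => Finset.mem_coe.2 (Finset.mem_Icc.2 ⟨ha.2.1, ha.2.2.1⟩)) hψ]
  simp only [numeratorWeight, Set.indicator_indicator]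

theorem stmt15_general
    {Ω : Type*} [MeasurableSpace Ω] (μ : Measure Ω) [IsProbabilityMeasure μ]
    (ε : ℝ)
    (p : ℕ → ℝ) (hp : ∀ n, p n ∈ Set.Icc (0 : ℝ) 1)
    (P : Ω → ℕ → Set ℕ)
    (hPmeas : ∀ n a : ℕ, MeasurableSet {ω | a ∈ P ω n})
    (hPprob : ∀ n a : ℕ, 1 ≤ a → a ≤ n → μ {ω | a ∈ P ω n} = ENNReal.ofReal (p n))
    (hPindep : iIndepSet (fun q : ℕ × ℕ => {ω | q.2 ∈ P ω q.1}) μ)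
    (ψ : ℕ → ℝ) (hψ : ∀ k, ψ k ∈ Set.Icc (0 : ℝ) (1 / 2))
    (J : Set ℝ)
    (N : ℕ) :
    variance (fun ω => ∑ n ∈ Finset.Icc 1 N, (volume (EQset ε (P ω) ψ n ∩ J)).toReal) μ
      ≤ 4 * ∑ n ∈ Finset.Icc 1 N, p n * ψ n ^ 2 / n := by
  have hsum : (fun ω => ∑ n ∈ Finset.Icc 1 N, (volume (EQset ε (P ω) ψ n ∩ J)).toReal)
      = fun ω => ∑ q ∈ fractionIndices N,
          {ω | q.2 ∈ P ω q.1}.indicator (fun _ => numeratorWeight ε ψ J q.1 q.2) ω := by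
    funext ω
    simp only [sum_fractionIndices, ← measureReal_def, measureReal_EQset_inter _ _ (hψ _).2]
    -- both indicators unfold to `if a ∈ P ω n then _ else 0`
    rfl
  have hprob : ∀ q ∈ fractionIndices N, μ.real {ω | q.2 ∈ P ω q.1} = p q.1 := fun q hq => by
    obtain ⟨-, ha⟩ := mem_fractionIndices.1 hq
    rw [Finset.mem_Icc] at ha
    rw [measureReal_def, hPprob _ _ ha.1 ha.2, ENNReal.toReal_ofReal (hp _).1]
  rw [hsum]
  calc _ ≤ ∑ q ∈ fractionIndices N,
          numeratorWeight ε ψ J q.1 q.2 ^ 2 * μ.real {ω | q.2 ∈ P ω q.1} :=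
        hPindep.variance_sum_indicator_le (fun q => hPmeas q.1 q.2) _ _
    _ ≤ ∑ q ∈ fractionIndices N, (2 * ψ q.1 / q.1) ^ 2 * p q.1 := by
        refine Finset.sum_le_sum fun q hq => ?_
        rw [hprob q hq]
        gcongr
        exacts [(hp _).1, numeratorWeight_nonneg .., numeratorWeight_le _ _ (hψ _).1 _]
    _ = 4 * ∑ n ∈ Finset.Icc 1 N, p n * ψ n ^ 2 / n := by
        rw [sum_fractionIndices, Finset.mul_sum]
        refine Finset.sum_congr rfl fun n hn => ?_
        have : (n : ℝ) ≠ 0 := Nat.cast_ne_zero.2 (by simp at hn; omega)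
        simp only [Finset.sum_const, Nat.card_Icc, add_tsub_cancel_right, nsmul_eq_mul]
        field_simp
        ring

/-- Variance of the partial sums of measures of approximation sets:
`σ²[∑_{n ≤ N} λ(E_n^Q ∩ J)] ≤ 4 ∑_{n ≤ N} pₙ ψ(n)²/n`. -/
theorem stmt15
    {Ω : Type*} [MeasurableSpace Ω] (μ : Measure Ω) [IsProbabilityMeasure μ]
    (ε : ℝ) (hε : ε ∈ Set.Ioo (0 : ℝ) 1)
    (p : ℕ → ℝ) (hp : ∀ n, p n ∈ Set.Icc (0 : ℝ) 1)
    (P : Ω → ℕ → Set ℕ)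
    (hPsub : ∀ ω n, P ω n ⊆ Set.Icc 1 n)
    (hPmeas : ∀ n a : ℕ, MeasurableSet {ω | a ∈ P ω n})
    (hPprob : ∀ n a : ℕ, 1 ≤ a → a ≤ n → μ {ω | a ∈ P ω n} = ENNReal.ofReal (p n))
    (hPindep : iIndepSet (fun q : ℕ × ℕ => {ω | q.2 ∈ P ω q.1}) μ)
    (ψ : ℕ → ℝ) (hψ : ∀ k, ψ k ∈ Set.Icc (0 : ℝ) (1 / 2))
    (J : Set ℝ) (hJ : J.OrdConnected) (hJ1 : J ⊆ Set.Icc (0 : ℝ) 1)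
    (N : ℕ) :
    variance (fun ω => ∑ n ∈ Finset.Icc 1 N, (volume (EQset ε (P ω) ψ n ∩ J)).toReal) μ
      ≤ 4 * ∑ n ∈ Finset.Icc 1 N, p n * ψ n ^ 2 / n :=
  stmt15_general μ ε p hp P hPmeas hPprob hPindep ψ hψ J N
end
end
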